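/- arXiv:2001.07327 — 3 statements merged into one kernel-verified Lean document; each statement's English description precedes it below -/
import Mathlib

section
/- Let A, C : H ⇉ H be maximally monotone, B : H → H monotone, and λ > 0. Suppose x, z ∈ H satisfy z - x ∈ λA(x) and x - z ∈ λ(B+C)(x), and the points x_k, y_k, z_k, z_{k+1}, y_{k-1}, y_{k-2} ∈ H satisfy z_k - x_k ∈ λA(x_k), 2x_k - z_k - y_k - 2λB(y_{k-1}) + λB(y_{k-2}) ∈ λC(y_k), and z_{k+1} = z_k + y_k - x_k. Then ‖z_{k+1} - z‖² + 2λ⟨B(y_k) - B(y_{k-1}), x - y_k⟩ + ‖z_{k+1} - z_k‖² ≤ ‖z_k - z‖² + 2λ⟨B(y_{k-1}) - B(y_{k-2}), x - y_{k-1}⟩ + 2λ⟨B(y_{k-1}) - B(y_{k-2}), y_{k-1} - y_k⟩. -/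
/-!
Monotonicity of `A` at `(x, x_k)`, of `C` at `(x, y_k)` and of `B` at `(x, y_k)` gives three
nonnegative inner products. Splitting `x - y_k = (x - y_{k-1}) + (y_{k-1} - y_k)` in the
`B(y_{k-1}) - B(y_{k-2})` term, their sum is exactly the gap in the claimed inequality, by the
identity `‖t - b‖² + ‖a - b‖² + 2⟪t + a - b, b⟫ = ‖t - a‖² + 2⟪t, a⟫` (both sides are
`‖t‖² + ‖a‖²`) at `t = (z_k - x_k) - (z - x)`, `a = x - x_k`, `b = x - y_k`.
-/

open scoped RealInnerProductSpace

/-- A set-valued operator `A : H ⇉ H` is monotone. -/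
def MonotoneOp {H : Type*} [NormedAddCommGroup H] [InnerProductSpace ℝ H]
    (A : H → Set H) : Prop :=
  ∀ ⦃x y u v : H⦄, u ∈ A x → v ∈ A y → 0 ≤ ⟪u - v, x - y⟫

/-- A set-valued operator `A : H ⇉ H` is maximally monotone. -/
def MaxMonotoneOp {H : Type*} [NormedAddCommGroup H] [InnerProductSpace ℝ H]
    (A : H → Set H) : Prop :=
  MonotoneOp A ∧
    ∀ x u : H, (∀ y v : H, v ∈ A y → 0 ≤ ⟪u - v, x - y⟫) → u ∈ A x

section

variable {H : Type*} [NormedAddCommGroup H] [InnerProductSpace ℝ H]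

theorem MonotoneOp.inner_nonneg_of_smul_mem {A : H → Set H} (hA : MonotoneOp A) {lam : ℝ}
    (hlam : 0 ≤ lam) {x y u v : H} (hu : ∃ a ∈ A x, u = lam • a) (hv : ∃ b ∈ A y, v = lam • b) :
    0 ≤ ⟪u - v, x - y⟫ := by
  obtain ⟨a, ha, rfl⟩ := hu
  obtain ⟨b, hb, rfl⟩ := hv
  rw [← smul_sub, real_inner_smul_left]
  exact mul_nonneg hlam (hA ha hb)

theorem norm_sub_sq_add_norm_sub_sq_add_inner (t a b : H) :
    ‖t - b‖ ^ 2 + ‖a - b‖ ^ 2 + 2 * ⟪t + a - b, b⟫ = ‖t - a‖ ^ 2 + 2 * ⟪t, a⟫ := by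
  simp only [norm_sub_sq_real, inner_sub_left, inner_add_left, real_inner_self_eq_norm_sq]
  ring

end

theorem bforb_key_lemma_general
    {H : Type*} [NormedAddCommGroup H] [InnerProductSpace ℝ H]
    (A C : H → Set H) (hA : MaxMonotoneOp A) (hC : MaxMonotoneOp C)
    (B : H → H) (hB : ∀ u v : H, 0 ≤ ⟪B u - B v, u - v⟫)
    (lam : ℝ) (hlam : 0 < lam)
    (x z xk yk zk zkp1 yk1 yk2 : H)
    -- z - x ∈ λA(x)
    (hzx : ∃ a ∈ A x, z - x = lam • a)
    -- x - z ∈ λ(B+C)(x), i.e. x - z - λB(x) ∈ λC(x)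
    (hxz : ∃ c ∈ C x, x - z = lam • (B x + c))
    -- z_k - x_k ∈ λA(x_k)
    (hAk : ∃ a ∈ A xk, zk - xk = lam • a)
    -- 2x_k - z_k - y_k - 2λB(y_{k-1}) + λB(y_{k-2}) ∈ λC(y_k)
    (hCk : ∃ c ∈ C yk,
        (2 : ℝ) • xk - zk - yk - (2 * lam) • B yk1 + lam • B yk2 = lam • c)
    (hz : zkp1 = zk + yk - xk) :
    ‖zkp1 - z‖ ^ 2 + 2 * lam * ⟪B yk - B yk1, x - yk⟫ + ‖zkp1 - zk‖ ^ 2 ≤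
      ‖zk - z‖ ^ 2 + 2 * lam * ⟪B yk1 - B yk2, x - yk1⟫ +
        2 * lam * ⟪B yk1 - B yk2, yk1 - yk⟫ := by
  have hAx := hA.1.inner_nonneg_of_smul_mem hlam.le hzx hAk
  obtain ⟨c, hc, hxc⟩ := hxz
  have hxzC : x - z - lam • B x = lam • c := by rw [hxc, smul_add]; abel
  have hCx := hC.1.inner_nonneg_of_smul_mem hlam.le ⟨c, hc, hxzC⟩ hCk
  have hBx := mul_nonneg hlam.le (hB x yk)
  have hCB : ⟪x - z - lam • B x - ((2 : ℝ) • xk - zk - yk - (2 * lam) • B yk1 + lam • B yk2),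
        x - yk⟫ + lam * ⟪B x - B yk, x - yk⟫ =
      ⟪zk + yk - (2 : ℝ) • xk - (z - x), x - yk⟫ - lam * ⟪B yk - B yk1, x - yk⟫ +
        lam * ⟪B yk1 - B yk2, x - yk1⟫ + lam * ⟪B yk1 - B yk2, yk1 - yk⟫ := by
    simp only [inner_sub_left, inner_add_left, inner_sub_right, real_inner_smul_left]
    ring
  have hnorm := norm_sub_sq_add_norm_sub_sq_add_inner (zk - xk - (z - x)) (x - xk) (x - yk)
  rw [show zk - xk - (z - x) + (x - xk) - (x - yk) = zk + yk - (2 : ℝ) • xk - (z - x) by module,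
    show zk - xk - (z - x) - (x - yk) = zkp1 - z by rw [hz]; abel,
    show x - xk - (x - yk) = zkp1 - zk by rw [hz]; abel,
    show zk - xk - (z - x) - (x - xk) = zk - z by abel, ← neg_sub (z - x) (zk - xk),
    inner_neg_left] at hnorm
  linarith

/-- Key one-step estimate (Lemma 3.1) for the backward-forward-reflected-backward
method. -/
theorem bforb_key_lemma
    {H : Type*} [NormedAddCommGroup H] [InnerProductSpace ℝ H] [CompleteSpace H]
    (A C : H → Set H) (hA : MaxMonotoneOp A) (hC : MaxMonotoneOp C)
    (B : H → H) (hB : ∀ u v : H, 0 ≤ ⟪B u - B v, u - v⟫)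
    (lam : ℝ) (hlam : 0 < lam)
    (x z xk yk zk zkp1 yk1 yk2 : H)
    -- z - x ∈ λA(x)
    (hzx : ∃ a ∈ A x, z - x = lam • a)
    -- x - z ∈ λ(B+C)(x), i.e. x - z - λB(x) ∈ λC(x)
    (hxz : ∃ c ∈ C x, x - z = lam • (B x + c))
    -- z_k - x_k ∈ λA(x_k)
    (hAk : ∃ a ∈ A xk, zk - xk = lam • a)
    -- 2x_k - z_k - y_k - 2λB(y_{k-1}) + λB(y_{k-2}) ∈ λC(y_k)
    (hCk : ∃ c ∈ C yk,
        (2 : ℝ) • xk - zk - yk - (2 * lam) • B yk1 + lam • B yk2 = lam • c)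
    (hz : zkp1 = zk + yk - xk) :
    ‖zkp1 - z‖ ^ 2 + 2 * lam * ⟪B yk - B yk1, x - yk⟫ + ‖zkp1 - zk‖ ^ 2 ≤
      ‖zk - z‖ ^ 2 + 2 * lam * ⟪B yk1 - B yk2, x - yk1⟫ +
        2 * lam * ⟪B yk1 - B yk2, yk1 - yk⟫ :=
  bforb_key_lemma_general A C hA hC B hB lam hlam x z xk yk zk zkp1 yk1 yk2 hzx hxz hAk hCk hz
end

section
/- (Opial's lemma) Let (z_k) be a sequence in a real Hilbert space H and Ω ⊆ H nonempty. If (a) for every z ∈ Ω the sequence (‖z_k - z‖) converges, and (b) every weak sequential cluster point of (z_k) belongs to Ω, then (z_k) converges weakly to a point in Ω. -/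
/-!
A sequence with `‖z k - w‖` convergent for some `w` is bounded, so by sequential Banach–Alaoglu
(applied in the separable closed span of the sequence) every subsequence has a weakly convergent
subsequence. Hence `z` converges weakly as soon as it has only one weak cluster point. For two
cluster points `w, w' ∈ Ω`, the identity
`2 ⟪z k, w' - w⟫ = ‖z k - w‖² - ‖z k - w'‖² - ‖w‖² + ‖w'‖²` shows that `⟪z k, w' - w⟫` converges,
so `⟪w, w' - w⟫ = ⟪w', w' - w⟫`, i.e. `‖w' - w‖² = 0`.
-/

open Filter Topology
open scoped RealInnerProductSpace

/-- A sequence converges weakly to `w` iff all inner products converge. -/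
def WeakConv {H : Type*} [NormedAddCommGroup H] [InnerProductSpace ℝ H]
    (z : ℕ → H) (w : H) : Prop :=
  ∀ y : H, Tendsto (fun k => ⟪z k, y⟫) atTop (𝓝 ⟪w, y⟫)

/-- `w` is a weak sequential cluster point of `(z_k)`. -/
def WeakClusterPt {H : Type*} [NormedAddCommGroup H] [InnerProductSpace ℝ H]
    (z : ℕ → H) (w : H) : Prop :=
  ∃ φ : ℕ → ℕ, StrictMono φ ∧ WeakConv (z ∘ φ) w

theorem exists_norm_le_of_tendsto_norm_sub {E : Type*} [SeminormedAddCommGroup E] {z : ℕ → E}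
    {w : E} {l : ℝ} (hl : Tendsto (fun k => ‖z k - w‖) atTop (𝓝 l)) : ∃ C, ∀ k, ‖z k‖ ≤ C := by
  obtain ⟨B, hB⟩ := hl.bddAbove_range
  exact ⟨B + ‖w‖, fun k => (norm_le_norm_sub_add (z k) w).trans (by gcongr; exact hB ⟨k, rfl⟩)⟩

section WeakConvergence

variable {H : Type*} [NormedAddCommGroup H] [InnerProductSpace ℝ H] {z : ℕ → H}

theorem WeakConv.comp_tendsto_atTop {w : H} (hz : WeakConv z w) {φ : ℕ → ℕ}
    (hφ : Tendsto φ atTop atTop) : WeakConv (z ∘ φ) w :=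
  fun y => (hz y).comp hφ

theorem WeakClusterPt.of_comp {w : H} {φ : ℕ → ℕ} (hφ : Tendsto φ atTop atTop)
    (hw : WeakClusterPt (z ∘ φ) w) : WeakClusterPt z w := by
  obtain ⟨χ, hχ, hwχ⟩ := hw
  obtain ⟨ρ, hρ, hφχρ⟩ := strictMono_subseq_of_tendsto_atTop (hφ.comp hχ.tendsto_atTop)
  exact ⟨φ ∘ χ ∘ ρ, hφχρ, hwχ.comp_tendsto_atTop hρ.tendsto_atTop⟩

theorem WeakClusterPt.inner_eq_of_tendsto {w v : H} {c : ℝ} (hw : WeakClusterPt z w)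
    (hv : Tendsto (fun k => ⟪z k, v⟫) atTop (𝓝 c)) : ⟪w, v⟫ = c := by
  obtain ⟨φ, hφ, hwφ⟩ := hw
  exact tendsto_nhds_unique (hwφ v) (hv.comp hφ.tendsto_atTop)

theorem exists_weakClusterPt_of_norm_le_of_separableSpace [CompleteSpace H]
    [TopologicalSpace.SeparableSpace H] {C : ℝ} (hC : ∀ k, ‖z k‖ ≤ C) :
    ∃ w, WeakClusterPt z w := by
  let f : ℕ → WeakDual ℝ H := fun k => StrongDual.toWeakDual (InnerProductSpace.toDual ℝ H (z k))
  obtain ⟨a, -, φ, hφ, ha⟩ := WeakDual.isSeqCompact_closedBall ℝ H 0 C (x := f)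
    (fun k => by simpa [f] using hC k)
  refine ⟨(InnerProductSpace.toDual ℝ H).symm (WeakDual.toStrongDual a), φ, hφ, fun y => ?_⟩
  simpa [f, Function.comp_def] using ((WeakDual.eval_continuous y).tendsto a).comp ha

theorem exists_weakClusterPt_of_norm_le [CompleteSpace H] {C : ℝ} (hC : ∀ k, ‖z k‖ ≤ C) :
    ∃ w, WeakClusterPt z w := by
  set M := (Submodule.span ℝ (Set.range z)).topologicalClosure
  have hzM : ∀ k, z k ∈ M := fun k =>
    Submodule.le_topologicalClosure _ (Submodule.subset_span ⟨k, rfl⟩)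
  have : CompleteSpace M := (Submodule.isClosed_topologicalClosure _).completeSpace_coe
  have : TopologicalSpace.SeparableSpace M :=
    (Set.countable_range z).isSeparable.span.closure.separableSpace
  obtain ⟨w, φ, hφ, hw⟩ :=
    exists_weakClusterPt_of_norm_le_of_separableSpace (z := fun k => (⟨z k, hzM k⟩ : M)) hC
  -- `z k` and `w` lie in `M`, so testing against `y` is testing against its projection onto `M`.
  exact ⟨w, φ, hφ, fun y => by simpa using hw (M.orthogonalProjectionOnto y)⟩

theorem weakConv_of_forall_weakClusterPt_eq [CompleteSpace H] {C : ℝ} (hC : ∀ k, ‖z k‖ ≤ C)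
    {w : H} (h : ∀ w', WeakClusterPt z w' → w' = w) : WeakConv z w := by
  intro y
  refine tendsto_of_subseq_tendsto fun φ hφ => ?_
  obtain ⟨w', χ, hχ, hw'⟩ := exists_weakClusterPt_of_norm_le (z := z ∘ φ) fun k => hC (φ k)
  obtain rfl := h w' (WeakClusterPt.of_comp hφ ⟨χ, hχ, hw'⟩)
  exact ⟨χ, hw' y⟩

theorem tendsto_inner_sub_of_tendsto_norm_sub {w w' : H} {l l' : ℝ}
    (hl : Tendsto (fun k => ‖z k - w‖) atTop (𝓝 l))
    (hl' : Tendsto (fun k => ‖z k - w'‖) atTop (𝓝 l')) :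
    Tendsto (fun k => ⟪z k, w' - w⟫) atTop (𝓝 ((l ^ 2 - l' ^ 2 - ‖w‖ ^ 2 + ‖w'‖ ^ 2) / 2)) := by
  have polarization : ∀ k, ⟪z k, w' - w⟫
      = (‖z k - w‖ ^ 2 - ‖z k - w'‖ ^ 2 - ‖w‖ ^ 2 + ‖w'‖ ^ 2) / 2 := fun k => by
    rw [inner_sub_right, norm_sub_sq_real, norm_sub_sq_real]; ring
  simpa only [polarization] using
    ((((hl.pow 2).sub (hl'.pow 2)).sub_const _).add_const _).div_const 2

theorem WeakClusterPt.eq_of_tendsto_norm_sub {w w' : H} {l l' : ℝ}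
    (hw : WeakClusterPt z w) (hw' : WeakClusterPt z w')
    (hl : Tendsto (fun k => ‖z k - w‖) atTop (𝓝 l))
    (hl' : Tendsto (fun k => ‖z k - w'‖) atTop (𝓝 l')) : w' = w := by
  have hc := tendsto_inner_sub_of_tendsto_norm_sub hl hl'
  have : ⟪w' - w, w' - w⟫ = 0 := by
    rw [inner_sub_left, hw.inner_eq_of_tendsto hc, hw'.inner_eq_of_tendsto hc, sub_self]
  exact sub_eq_zero.mp (inner_self_eq_zero.mp this)

end WeakConvergence

/-- Opial's lemma: if `‖z_k - z‖` converges for each `z ∈ Ω` and every weak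
sequential cluster point of `(z_k)` lies in `Ω`, then `(z_k)` converges weakly
to a point of `Ω`. -/
theorem opial_lemma
    {H : Type*} [NormedAddCommGroup H] [InnerProductSpace ℝ H] [CompleteSpace H]
    (z : ℕ → H) (Ω : Set H) (hΩ : Ω.Nonempty)
    (ha : ∀ w ∈ Ω, ∃ l : ℝ, Tendsto (fun k => ‖z k - w‖) atTop (𝓝 l))
    (hb : ∀ w : H, WeakClusterPt z w → w ∈ Ω) :
    ∃ w ∈ Ω, WeakConv z w := by
  obtain ⟨w₀, hw₀⟩ := hΩ
  obtain ⟨l₀, hl₀⟩ := ha w₀ hw₀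
  obtain ⟨C, hC⟩ := exists_norm_le_of_tendsto_norm_sub hl₀
  obtain ⟨w, hw⟩ := exists_weakClusterPt_of_norm_le hC
  refine ⟨w, hb w hw, weakConv_of_forall_weakClusterPt_eq hC fun w' hw' => ?_⟩
  obtain ⟨l, hl⟩ := ha w (hb w hw)
  obtain ⟨l', hl'⟩ := ha w' (hb w' hw')
  exact hw.eq_of_tendsto_norm_sub hw' hl hl'
end

section
/- Let A, C : H ⇉ H be maximally monotone, B : H → H monotone, λ > 0. Suppose x, z ∈ H satisfy z - x ∈ λA(x) and x - z ∈ λ(B+C)(x), and the points x_j, y_j, z_j (j = k-1, k) satisfy z_j - x_j ∈ λA(x_j), 2x_j - z_j - y_j - λB(2y_{j-1} - y_{j-2}) ∈ λC(y_j), and z_{j+1} = z_j + y_j - x_j. Writing ȳ_j = 2y_j - y_{j-1} and z̄_k = 2z_k - z_{k-1}, then ‖z_{k+1} - z‖² + 2λ⟨B(ȳ_{k-1}) - B(x), y_k - y_{k-1}⟩ + 2‖z_{k+1} - z_k‖² + ‖z_{k+1} - z̄_k‖² ≤ ‖z_k - z‖² + 2λ⟨B(ȳ_{k-2}) - B(x),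 y_{k-1} - y_{k-2}⟩ + ‖z_k - z_{k-1}‖² + 2λ⟨B(ȳ_{k-1}) - B(ȳ_{k-2}), ȳ_{k-1} - y_k⟩. -/
/-!
The difference of the two sides is exactly a nonnegative combination of five monotonicity
inequalities: `A` at the pairs `(x, x_k)` and `(x_{k-1}, x_k)`, `C` at `(x, y_k)` and
`(y_{k-1}, y_k)`, each with weight `2`, and `B` at `(ȳ_{k-1}, x)` with weight `2λ`.
-/

open scoped RealInnerProductSpace

theorem MonotoneOp.inner_sub_nonneg_of_mem_smul {H : Type*} [NormedAddCommGroup H]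
    [InnerProductSpace ℝ H] {A : H → Set H} (hA : MonotoneOp A) {lam : ℝ} (hlam : 0 ≤ lam)
    {x y p q : H} (hp : ∃ u ∈ A x, p = lam • u) (hq : ∃ v ∈ A y, q = lam • v) :
    0 ≤ ⟪p - q, x - y⟫ := by
  obtain ⟨u, hu, rfl⟩ := hp
  obtain ⟨v, hv, rfl⟩ := hq
  rw [← smul_sub, real_inner_smul_left]
  exact mul_nonneg hlam (hA hu hv)

/-- `b`, `b'` and `bx` stand for `B(ȳ_{k-1})`, `B(ȳ_{k-2})` and `B x`. -/
theorem brfob_energy_identity {H : Type*} [NormedAddCommGroup H] [InnerProductSpace ℝ H]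
    (lam : ℝ) (b b' bx x z xk xk1 yk yk1 yk2 zk zk1 zkp1 : H)
    (hz : zkp1 = zk + yk - xk) (hz1 : zk = zk1 + yk1 - xk1) :
    (‖zk - z‖ ^ 2 + 2 * lam * ⟪b' - bx, yk1 - yk2⟫ + ‖zk - zk1‖ ^ 2 +
        2 * lam * ⟪b - b', ((2 : ℝ) • yk1 - yk2) - yk⟫) -
      (‖zkp1 - z‖ ^ 2 + 2 * lam * ⟪b - bx, yk - yk1⟫ +
        2 * ‖zkp1 - zk‖ ^ 2 + ‖zkp1 - ((2 : ℝ) • zk - zk1)‖ ^ 2) =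
      2 * ⟪(z - x) - (zk - xk), x - xk⟫ +
      2 * ⟪(x - z - lam • bx) - ((2 : ℝ) • xk - zk - yk - lam • b), x - yk⟫ +
      2 * ⟪((2 : ℝ) • xk1 - zk1 - yk1 - lam • b') - ((2 : ℝ) • xk - zk - yk - lam • b),
          yk1 - yk⟫ +
      2 * ⟪(zk1 - xk1) - (zk - xk), xk1 - xk⟫ +
      2 * lam * ⟪b - bx, ((2 : ℝ) • yk1 - yk2) - x⟫ := by
  subst hz hz1
  simp only [← real_inner_self_eq_norm_sq, inner_sub_left, inner_sub_right,
    inner_add_left, inner_add_right, real_inner_smul_right, real_inner_comm]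
  ring

theorem brfob_key_lemma_general
    {H : Type*} [NormedAddCommGroup H] [InnerProductSpace ℝ H]
    (A C : H → Set H) (hA : MaxMonotoneOp A) (hC : MaxMonotoneOp C)
    (B : H → H) (hB : ∀ u v : H, 0 ≤ ⟪B u - B v, u - v⟫)
    (lam : ℝ) (hlam : 0 < lam)
    (x z xk xk1 yk yk1 yk2 yk3 zk zk1 zkp1 : H)
    -- z - x ∈ λA(x)
    (hzx : ∃ a ∈ A x, z - x = lam • a)
    -- x - z ∈ λ(B+C)(x), i.e. x - z - λB(x) ∈ λC(x)
    (hxz : ∃ c ∈ C x, x - z = lam • (B x + c))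
    -- z_j - x_j ∈ λA(x_j) for j = k, k-1
    (hAk : ∃ a ∈ A xk, zk - xk = lam • a)
    (hAk1 : ∃ a ∈ A xk1, zk1 - xk1 = lam • a)
    -- 2x_j - z_j - y_j - λB(2y_{j-1} - y_{j-2}) ∈ λC(y_j) for j = k, k-1
    (hCk : ∃ c ∈ C yk,
        (2 : ℝ) • xk - zk - yk - lam • B ((2 : ℝ) • yk1 - yk2) = lam • c)
    (hCk1 : ∃ c ∈ C yk1,
        (2 : ℝ) • xk1 - zk1 - yk1 - lam • B ((2 : ℝ) • yk2 - yk3) = lam • c)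
    -- z_{j+1} = z_j + y_j - x_j for j = k, k-1
    (hz : zkp1 = zk + yk - xk) (hz1 : zk = zk1 + yk1 - xk1) :
    ‖zkp1 - z‖ ^ 2 +
        2 * lam * ⟪B ((2 : ℝ) • yk1 - yk2) - B x, yk - yk1⟫ +
        2 * ‖zkp1 - zk‖ ^ 2 + ‖zkp1 - ((2 : ℝ) • zk - zk1)‖ ^ 2 ≤
      ‖zk - z‖ ^ 2 +
        2 * lam * ⟪B ((2 : ℝ) • yk2 - yk3) - B x, yk1 - yk2⟫ +
        ‖zk - zk1‖ ^ 2 +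
        2 * lam * ⟪B ((2 : ℝ) • yk1 - yk2) - B ((2 : ℝ) • yk2 - yk3),
            ((2 : ℝ) • yk1 - yk2) - yk⟫ := by
  have hxC : ∃ c ∈ C x, x - z - lam • B x = lam • c := by
    obtain ⟨c, hc, hce⟩ := hxz
    exact ⟨c, hc, by rw [hce, smul_add]; abel⟩
  have hA_x := hA.1.inner_sub_nonneg_of_mem_smul hlam.le hzx hAk
  have hA_xk1 := hA.1.inner_sub_nonneg_of_mem_smul hlam.le hAk1 hAk
  have hC_x := hC.1.inner_sub_nonneg_of_mem_smul hlam.le hxC hCk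
  have hC_yk1 := hC.1.inner_sub_nonneg_of_mem_smul hlam.le hCk1 hCk
  have hB_x := mul_nonneg hlam.le (hB ((2 : ℝ) • yk1 - yk2) x)
  linarith [brfob_energy_identity lam (B ((2 : ℝ) • yk1 - yk2)) (B ((2 : ℝ) • yk2 - yk3)) (B x)
    x z xk xk1 yk yk1 yk2 zk zk1 zkp1 hz hz1]

/-- Key one-step estimate (Lemma 4.1) for the backward-reflected-forward-backward
method. Here `ȳ_j = 2y_j - y_{j-1}` and `z̄_k = 2z_k - z_{k-1}`. -/
theorem brfob_key_lemma
    {H : Type*} [NormedAddCommGroup H] [InnerProductSpace ℝ H] [CompleteSpace H]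
    (A C : H → Set H) (hA : MaxMonotoneOp A) (hC : MaxMonotoneOp C)
    (B : H → H) (hB : ∀ u v : H, 0 ≤ ⟪B u - B v, u - v⟫)
    (lam : ℝ) (hlam : 0 < lam)
    (x z xk xk1 yk yk1 yk2 yk3 zk zk1 zkp1 : H)
    -- z - x ∈ λA(x)
    (hzx : ∃ a ∈ A x, z - x = lam • a)
    -- x - z ∈ λ(B+C)(x), i.e. x - z - λB(x) ∈ λC(x)
    (hxz : ∃ c ∈ C x, x - z = lam • (B x + c))
    -- z_j - x_j ∈ λA(x_j) for j = k, k-1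
    (hAk : ∃ a ∈ A xk, zk - xk = lam • a)
    (hAk1 : ∃ a ∈ A xk1, zk1 - xk1 = lam • a)
    -- 2x_j - z_j - y_j - λB(2y_{j-1} - y_{j-2}) ∈ λC(y_j) for j = k, k-1
    (hCk : ∃ c ∈ C yk,
        (2 : ℝ) • xk - zk - yk - lam • B ((2 : ℝ) • yk1 - yk2) = lam • c)
    (hCk1 : ∃ c ∈ C yk1,
        (2 : ℝ) • xk1 - zk1 - yk1 - lam • B ((2 : ℝ) • yk2 - yk3) = lam • c)
    -- z_{j+1} = z_j + y_j - x_j for j = k, k-1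
    (hz : zkp1 = zk + yk - xk) (hz1 : zk = zk1 + yk1 - xk1) :
    ‖zkp1 - z‖ ^ 2 +
        2 * lam * ⟪B ((2 : ℝ) • yk1 - yk2) - B x, yk - yk1⟫ +
        2 * ‖zkp1 - zk‖ ^ 2 + ‖zkp1 - ((2 : ℝ) • zk - zk1)‖ ^ 2 ≤
      ‖zk - z‖ ^ 2 +
        2 * lam * ⟪B ((2 : ℝ) • yk2 - yk3) - B x, yk1 - yk2⟫ +
        ‖zk - zk1‖ ^ 2 +
        2 * lam * ⟪B ((2 : ℝ) • yk1 - yk2) - B ((2 : ℝ) • yk2 - yk3),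
            ((2 : ℝ) • yk1 - yk2) - yk⟫ :=
  brfob_key_lemma_general A C hA hC B hB lam hlam x z xk xk1 yk yk1 yk2 yk3 zk zk1 zkp1 hzx hxz hAk
    hAk1 hCk hCk1 hz hz1
end
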